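/- arXiv:2509.01188 — 5 statements merged into one kernel-verified Lean document; each statement's English description precedes it below -/
import Mathlib

section
/- Let Π, Π̂ ∈ ℝ^{n×n} with Π invertible, let w ∈ ℝⁿ, ε > 0, and let φ : ℝⁿ → ℝ be differentiable, strictly convex and radially unbounded (φ(y) → ∞ as ‖y‖ → ∞). Suppose the matrix Π Π̂ᵀ + Π̂ Πᵀ is positive definite. Then the map u ↦ φ(Πu + w) attains its minimum at a unique point u*, and every continuously differentiable solution u : [0,∞) → ℝⁿ of the online approximate gradient dynamics u̇(t) = −ε Π̂ᵀ ∇φ(Πu(t) + w) converges to u* as t → ∞. -/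
/-!
Put `y = Π u + w`. Then `ẏ = -T ∇φ(y)` with `T = ε Π Π̂ᵀ`, and positive definiteness of
`Π Π̂ᵀ + Π̂ Πᵀ` gives `⟪g, T g⟫ ≥ μ ‖g‖²` for some `μ > 0`. So `φ(y(t))` is a Lyapunov function:
it decreases, which keeps `y` in a compact sublevel set of the coercive `φ`; and while
`φ(y(t)) ≥ c > min φ`, convexity gives `c - min φ ≤ ‖∇φ(y)‖ ‖y - y*‖`, so `‖∇φ(y)‖` and with it
the rate of decrease are bounded below. Hence `φ(y(t)) → min φ`, the unique minimiser `y*` of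
the strictly convex `φ` is the only cluster point of `y`, and `u(t) → Π⁻¹ (y* - w)`.
-/

open Matrix Filter Set Topology
open scoped RealInnerProductSpace

section

variable {F : Type*} [NormedAddCommGroup F] [InnerProductSpace ℝ F]

open InnerProductSpace in
theorem ConvexOn.sub_le_inner_sub_of_hasGradientAt [CompleteSpace F] {f : F → ℝ} {g x : F}
    (hf : ConvexOn ℝ univ f) (hg : HasGradientAt f g x) (y : F) :
    f x - f y ≤ ⟪g, x - y⟫ := by
  have hline : ConvexOn ℝ univ (f ∘ AffineMap.lineMap x y) :=
    (hf.comp_affineMap (AffineMap.lineMap x y)).subset (subset_univ _) convex_univ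
  have hd : HasDerivAt (f ∘ AffineMap.lineMap x y) ⟪g, y - x⟫ (0 : ℝ) := by
    have hg' : HasFDerivAt f (toDual ℝ F g) (AffineMap.lineMap x y (0 : ℝ)) := by
      simpa using hg.hasFDerivAt
    simpa using hg'.comp_hasDerivAt (0 : ℝ) AffineMap.hasDerivAt_lineMap
  have hslope := hline.le_slope_of_hasDerivAt (mem_univ 0) (mem_univ 1) one_pos hd
  simp only [slope_def_field, Function.comp_apply, AffineMap.lineMap_apply_zero,
    AffineMap.lineMap_apply_one, sub_zero, div_one] at hslope
  rw [← neg_sub y x, inner_neg_right]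
  linarith

theorem exists_pos_mul_sq_norm_le_inner_apply_self [FiniteDimensional ℝ F] (T : F →ₗ[ℝ] F)
    (hT : ∀ x ≠ 0, 0 < ⟪x, T x⟫) : ∃ μ > 0, ∀ x, μ * ‖x‖ ^ 2 ≤ ⟪x, T x⟫ := by
  rcases subsingleton_or_nontrivial F with _ | _
  · exact ⟨1, one_pos, fun x => by simp [Subsingleton.elim x 0]⟩
  have hq : Continuous fun x => ⟪x, T x⟫ := continuous_id.inner T.continuous_of_finiteDimensional
  obtain ⟨v, hv, hmin⟩ := (isCompact_sphere (0 : F) 1).exists_isMinOn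
    (NormedSpace.sphere_nonempty.2 zero_le_one) hq.continuousOn
  have hv0 : v ≠ 0 := by rintro rfl; simp at hv
  refine ⟨⟪v, T v⟫, hT v hv0, fun x => ?_⟩
  rcases eq_or_ne x 0 with rfl | hx
  · simp
  have hx' : 0 < ‖x‖ := norm_pos_iff.2 hx
  have : ⟪v, T v⟫ ≤ ⟪‖x‖⁻¹ • x, T (‖x‖⁻¹ • x)⟫ :=
    hmin (show ‖x‖⁻¹ • x ∈ Metric.sphere (0 : F) 1 by simp [norm_smul, hx'.ne'])
  rw [map_smul, real_inner_smul_left, real_inner_smul_right] at this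
  calc ⟪v, T v⟫ * ‖x‖ ^ 2 ≤ ‖x‖⁻¹ * (‖x‖⁻¹ * ⟪x, T x⟫) * ‖x‖ ^ 2 := by gcongr
    _ = ⟪x, T x⟫ := by field_simp

end

theorem Matrix.inner_toEuclideanLin_self_pos {ι : Type*} [Fintype ι] [DecidableEq ι]
    {M : Matrix ι ι ℝ} (hM : (M + Mᵀ).PosDef) {x : EuclideanSpace ℝ ι} (hx : x ≠ 0) :
    0 < ⟪x, M.toEuclideanLin x⟫ := by
  have hpos := hM.dotProduct_mulVec_pos (x := WithLp.ofLp x) (by simpa using hx)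
  have hsymm : WithLp.ofLp x ⬝ᵥ Mᵀ *ᵥ WithLp.ofLp x = WithLp.ofLp x ⬝ᵥ M *ᵥ WithLp.ofLp x := by
    rw [mulVec_transpose, dotProduct_comm, ← dotProduct_mulVec]
  rw [star_trivial, add_mulVec, dotProduct_add, hsymm] at hpos
  rw [EuclideanSpace.inner_eq_star_dotProduct, toLpLin_apply, dotProduct_comm]
  simpa using hpos

theorem antitoneOn_Ici_of_hasDerivAt_nonpos {f f' : ℝ → ℝ} {a : ℝ}
    (hf : ∀ t, a ≤ t → HasDerivAt f (f' t) t) (hf' : ∀ t, a ≤ t → f' t ≤ 0) :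
    AntitoneOn f (Ici a) :=
  antitoneOn_of_hasDerivWithinAt_nonpos (convex_Ici a)
    (fun t ht => (hf t ht).continuousAt.continuousWithinAt)
    (fun t ht => (hf t (interior_subset ht)).hasDerivWithinAt)
    (fun t ht => hf' t (interior_subset ht))

theorem exists_lt_of_hasDerivAt_le_neg {f f' : ℝ → ℝ} {δ : ℝ} (hδ : 0 < δ)
    (hf : ∀ t, 0 ≤ t → HasDerivAt f (f' t) t) (hf' : ∀ t, 0 ≤ t → f' t ≤ -δ) (m : ℝ) :
    ∃ t, 0 ≤ t ∧ f t < m := by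
  have hanti : AntitoneOn (fun t => f t + δ * t) (Ici 0) :=
    antitoneOn_Ici_of_hasDerivAt_nonpos
      (fun t ht => (hf t ht).add ((hasDerivAt_id t).const_mul δ))
      (fun t ht => by linarith [hf' t ht])
  set t := max 0 ((f 0 - m) / δ) + 1
  have ht : 0 ≤ t := by positivity
  have hδt : f 0 - m < δ * t := by
    have := le_max_right 0 ((f 0 - m) / δ)
    rw [div_le_iff₀ hδ] at this
    nlinarith
  refine ⟨t, ht, ?_⟩
  have := hanti self_mem_Ici ht ht
  simp only [mul_zero, add_zero] at this
  linarith

theorem isCompact_setOf_le_of_tendsto_cocompact {X : Type*} [TopologicalSpace X] {f : X → ℝ}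
    (hf : Continuous f) (hcoer : Tendsto f (cocompact X) atTop) (a : ℝ) :
    IsCompact {x | f x ≤ a} := by
  obtain ⟨K, hK, hKsub⟩ := mem_cocompact.1 (hcoer (Ioi_mem_atTop a))
  refine hK.of_isClosed_subset (isClosed_le hf continuous_const) fun x hx => ?_
  by_contra hxK
  exact (hKsub hxK).not_ge (show f x ≤ a from hx)

theorem IsCompact.tendsto_nhds_of_tendsto_comp {X α : Type*} [TopologicalSpace X] [T2Space X]
    {f : X → ℝ} {s : Set X} {x₀ : X} {l : Filter α} {u : α → X} (hs : IsCompact s)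
    (hf : Continuous f) (huniq : ∀ x ∈ s, f x = f x₀ → x = x₀) (hmem : ∀ᶠ t in l, u t ∈ s)
    (hlim : Tendsto (f ∘ u) l (𝓝 (f x₀))) : Tendsto u l (𝓝 x₀) :=
  hs.tendsto_nhds_of_unique_mapClusterPt hmem fun x hx hcl =>
    huniq x hx (eq_of_nhds_neBot ((hcl.continuousAt_comp hf.continuousAt).clusterPt.mono hlim))

section GradientLikeFlow

variable {F : Type*} [NormedAddCommGroup F] [InnerProductSpace ℝ F] [CompleteSpace F]
  {φ : F → ℝ} {T : F → F} {y : ℝ → F} {μ : ℝ} {ystar : F}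

theorem hasDerivAt_comp_of_hasDerivAt_neg_gradient (hφ : Differentiable ℝ φ) {t : ℝ}
    (hy : HasDerivAt y (-T (gradient φ (y t))) t) :
    HasDerivAt (φ ∘ y) (-⟪gradient φ (y t), T (gradient φ (y t))⟫) t := by
  simpa [InnerProductSpace.toDual_apply_apply] using
    (hφ (y t)).hasGradientAt.hasFDerivAt.comp_hasDerivAt t hy

theorem antitoneOn_comp_of_hasDerivAt_neg_gradient (hφ : Differentiable ℝ φ)
    (hT : ∀ x, 0 ≤ ⟪x, T x⟫) (hy : ∀ t, 0 ≤ t → HasDerivAt y (-T (gradient φ (y t))) t) :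
    AntitoneOn (φ ∘ y) (Ici 0) :=
  antitoneOn_Ici_of_hasDerivAt_nonpos
    (fun t ht => hasDerivAt_comp_of_hasDerivAt_neg_gradient hφ (hy t ht))
    (fun _ _ => neg_nonpos.2 (hT _))

theorem exists_lt_of_hasDerivAt_neg_gradient (hφ : Differentiable ℝ φ)
    (hconv : ConvexOn ℝ univ φ) (hcoer : Tendsto φ (cocompact F) atTop) (hμ : 0 < μ)
    (hT : ∀ x, μ * ‖x‖ ^ 2 ≤ ⟪x, T x⟫) (hy : ∀ t, 0 ≤ t → HasDerivAt y (-T (gradient φ (y t))) t)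
    (hmin : ∀ z, φ ystar ≤ φ z) {c : ℝ} (hc : φ ystar < c) :
    ∃ t, 0 ≤ t ∧ φ (y t) < c := by
  by_contra! hge
  have hanti := antitoneOn_comp_of_hasDerivAt_neg_gradient hφ
    (fun x => (mul_nonneg hμ.le (sq_nonneg ‖x‖)).trans (hT x)) hy
  obtain ⟨r, hr⟩ := (Metric.isBounded_iff_subset_closedBall ystar).1
    (isCompact_setOf_le_of_tendsto_cocompact hφ.continuous hcoer (φ (y 0))).isBounded
  set R := max r 1
  have hR : 0 < R := lt_max_of_lt_right one_pos
  have hgrad : ∀ t, 0 ≤ t → (c - φ ystar) / R ≤ ‖gradient φ (y t)‖ := by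
    intro t ht
    have hdist : ‖y t - ystar‖ ≤ R :=
      (mem_closedBall_iff_norm.1 (hr (hanti self_mem_Ici ht ht))).trans (le_max_left r 1)
    rw [div_le_iff₀ hR]
    calc c - φ ystar ≤ φ (y t) - φ ystar := by linarith [hge t ht]
      _ ≤ ⟪gradient φ (y t), y t - ystar⟫ :=
        hconv.sub_le_inner_sub_of_hasGradientAt (hφ (y t)).hasGradientAt ystar
      _ ≤ ‖gradient φ (y t)‖ * ‖y t - ystar‖ := real_inner_le_norm _ _
      _ ≤ ‖gradient φ (y t)‖ * R := by gcongr
  have hδ : 0 < μ * ((c - φ ystar) / R) ^ 2 := by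
    have : 0 < c - φ ystar := sub_pos.2 hc
    positivity
  obtain ⟨t, ht, hlt⟩ := exists_lt_of_hasDerivAt_le_neg hδ
    (fun t ht => hasDerivAt_comp_of_hasDerivAt_neg_gradient hφ (hy t ht))
    (fun t ht => neg_le_neg <| calc
      μ * ((c - φ ystar) / R) ^ 2 ≤ μ * ‖gradient φ (y t)‖ ^ 2 := by
        gcongr
        exact hgrad t ht
      _ ≤ _ := hT _) (φ ystar)
  exact hlt.not_ge (hmin _)

theorem tendsto_of_hasDerivAt_neg_gradient (hφ : Differentiable ℝ φ)
    (hconv : ConvexOn ℝ univ φ) (hcoer : Tendsto φ (cocompact F) atTop) (hμ : 0 < μ)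
    (hT : ∀ x, μ * ‖x‖ ^ 2 ≤ ⟪x, T x⟫) (hy : ∀ t, 0 ≤ t → HasDerivAt y (-T (gradient φ (y t))) t)
    (hmin : ∀ z, φ ystar ≤ φ z) (huniq : ∀ z, φ z = φ ystar → z = ystar) :
    Tendsto y atTop (𝓝 ystar) := by
  have hanti := antitoneOn_comp_of_hasDerivAt_neg_gradient hφ
    (fun x => (mul_nonneg hμ.le (sq_nonneg ‖x‖)).trans (hT x)) hy
  have hK := isCompact_setOf_le_of_tendsto_cocompact hφ.continuous hcoer (φ (y 0))
  refine hK.tendsto_nhds_of_tendsto_comp hφ.continuous (fun z _ => huniq z) ?_ ?_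
  · filter_upwards [eventually_ge_atTop 0] with t ht using hanti self_mem_Ici ht ht
  refine tendsto_order.2 ⟨fun a ha => .of_forall fun t => ha.trans_le (hmin _), fun c hc => ?_⟩
  obtain ⟨t₀, ht₀, hlt⟩ := exists_lt_of_hasDerivAt_neg_gradient hφ hconv hcoer hμ hT hy hmin hc
  filter_upwards [eventually_ge_atTop t₀] with t ht
  exact (hanti ht₀ (ht₀.trans ht) ht).trans_lt hlt

end GradientLikeFlow

/-- If `Π Π̂ᵀ + Π̂ Πᵀ ≻ 0`, `Π` is invertible, and `φ` is differentiable,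
strictly convex and radially unbounded, then `u ↦ φ(Πu + w)` has a unique minimizer `u*`,
and every continuously differentiable solution of the OAG dynamics
`u̇ = -ε Π̂ᵀ ∇φ(Πu + w)` on `[0, ∞)` converges to `u*`. -/
theorem stmt0 {n : ℕ} (P Phat : Matrix (Fin n) (Fin n) ℝ) (hP : IsUnit P.det)
    (w : EuclideanSpace ℝ (Fin n)) (ε : ℝ) (hε : 0 < ε)
    (φ : EuclideanSpace ℝ (Fin n) → ℝ)
    (hdiff : Differentiable ℝ φ)
    (hconv : StrictConvexOn ℝ Set.univ φ)
    (hrad : Tendsto φ (comap norm atTop) atTop)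
    (hpd : (P * Phat.transpose + Phat * P.transpose).PosDef) :
    ∃ ustar : EuclideanSpace ℝ (Fin n),
      (∀ u, φ (Matrix.toEuclideanLin P ustar + w) ≤ φ (Matrix.toEuclideanLin P u + w)) ∧
      (∀ u', (∀ u, φ (Matrix.toEuclideanLin P u' + w) ≤ φ (Matrix.toEuclideanLin P u + w)) →
        u' = ustar) ∧
      (∀ u : ℝ → EuclideanSpace ℝ (Fin n),
        ContDiffOn ℝ 1 u (Set.Ici 0) →
        (∀ t : ℝ, 0 ≤ t → HasDerivAt u
          (-(ε • Matrix.toEuclideanLin Phat.transpose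
              (gradient φ (Matrix.toEuclideanLin P (u t) + w)))) t) →
        Tendsto u atTop (nhds ustar)) := by
  rw [comap_norm_atTop, Metric.cobounded_eq_cocompact] at hrad
  obtain ⟨ystar, hmin⟩ := hdiff.continuous.exists_forall_le hrad
  have huniq : ∀ y, φ y = φ ystar → y = ystar := fun y hy =>
    hconv.eq_of_isMinOn (fun z _ => hy ▸ hmin z) (fun z _ => hmin z) (mem_univ _) (mem_univ _)
  have hleft : ∀ u, P⁻¹.toEuclideanLin (P.toEuclideanLin u) = u := fun u => by
    simp [toLpLin_apply, mulVec_mulVec, nonsing_inv_mul _ hP]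
  have hright : ∀ y, P.toEuclideanLin (P⁻¹.toEuclideanLin y) = y := fun y => by
    simp [toLpLin_apply, mulVec_mulVec, mul_nonsing_inv _ hP]
  refine ⟨P⁻¹.toEuclideanLin (ystar - w), fun u => ?_, fun u' hu' => ?_, fun u _ hu => ?_⟩
  · rw [hright, sub_add_cancel]
    exact hmin _
  · have : P.toEuclideanLin u' + w = ystar := huniq _ <| le_antisymm
      (by simpa [hright] using hu' (P⁻¹.toEuclideanLin (ystar - w))) (hmin _)
    rw [← this, add_sub_cancel_right, hleft]
  set T : EuclideanSpace ℝ (Fin n) → EuclideanSpace ℝ (Fin n) :=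
    fun g => ε • P.toEuclideanLin (Phatᵀ.toEuclideanLin g)
  have hpos : ∀ g ≠ 0, 0 < ⟪g, (ε • (P * Phatᵀ).toEuclideanLin) g⟫ := fun g hg => by
    have : (P * Phatᵀ + (P * Phatᵀ)ᵀ).PosDef := by rwa [transpose_mul, transpose_transpose]
    simpa [real_inner_smul_right] using mul_pos hε (inner_toEuclideanLin_self_pos this hg)
  obtain ⟨μ, hμ, hμT⟩ := exists_pos_mul_sq_norm_le_inner_apply_self _ hpos
  have hy : Tendsto (fun t => P.toEuclideanLin (u t) + w) atTop (𝓝 ystar) := by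
    refine tendsto_of_hasDerivAt_neg_gradient (T := T) hdiff hconv.convexOn hrad hμ ?_ ?_
      hmin huniq
    · simpa [T] using hμT
    · intro t ht
      simpa [T] using ((P.toEuclideanLin.toContinuousLinearMap.hasFDerivAt).comp_hasDerivAt t
        (hu t ht)).add_const w
  simpa [Function.comp_def, hleft] using
    ((P⁻¹.toEuclideanLin.continuous_of_finiteDimensional.tendsto _).comp (hy.sub_const w))
end

section
/- Let Π, Π̂ ∈ ℝ^{n×n}, w ∈ ℝⁿ, ε > 0, and let φ : ℝⁿ → ℝ be differentiable. Suppose Π Π̂ᵀ + Π̂ Πᵀ is positive definite, and let u : ℝ → ℝⁿ be a differentiable solution of u̇(t) = −ε Π̂ᵀ ∇φ(Πu(t) + w). Then on any interval on which ∇φ(Πu(t) + w) ≠ 0, the function t ↦ φ(Πu(t) + w) is strictly decreasing. -/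
open Matrix

open scoped RealInnerProductSpace

/-! Along the flow, `y = Πu + w` moves with velocity `-ε Π Π̂ᵀ ∇φ(y)`, so by the chain rule the
cost decreases at rate `ε ⟪∇φ(y), Π Π̂ᵀ ∇φ(y)⟫`. This quadratic form only sees the symmetric part
`(Π Π̂ᵀ + Π̂ Πᵀ) / 2`, which is positive definite, so the rate is positive wherever `∇φ(y) ≠ 0`. -/

theorem HasGradientAt.comp_hasDerivAt {F : Type*} [NormedAddCommGroup F]
    [InnerProductSpace ℝ F] [CompleteSpace F] {φ : F → ℝ} {γ : ℝ → F} {g v : F} {t : ℝ}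
    (hφ : HasGradientAt φ g (γ t)) (hγ : HasDerivAt γ v t) :
    HasDerivAt (fun s => φ (γ s)) ⟪g, v⟫ t :=
  hφ.hasFDerivAt.comp_hasDerivAt t hγ

theorem strictAntiOn_of_hasDerivAt_neg {s : Set ℝ} (hs : s.OrdConnected) {f f' : ℝ → ℝ}
    (hf : ∀ t ∈ s, HasDerivAt f (f' t) t) (hf' : ∀ t ∈ s, f' t < 0) : StrictAntiOn f s :=
  strictAntiOn_of_hasDerivWithinAt_neg hs.convex
    (fun t ht => (hf t ht).continuousAt.continuousWithinAt)
    (fun t ht => (hf t (interior_subset ht)).hasDerivWithinAt)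
    (fun t ht => hf' t (interior_subset ht))

theorem Matrix.inner_toEuclideanLin_pos_of_posDef_add_transpose {ι : Type*} [Fintype ι]
    [DecidableEq ι] {M : Matrix ι ι ℝ} (hM : (M + Mᵀ).PosDef) {x : EuclideanSpace ℝ ι}
    (hx : x ≠ 0) : 0 < ⟪x, toEuclideanLin M x⟫ := by
  have h := hM.dotProduct_mulVec_pos (x := WithLp.ofLp x) (by simpa using hx)
  rw [star_trivial, add_mulVec, dotProduct_add, dotProduct_transpose_mulVec] at h
  rw [EuclideanSpace.inner_eq_star_dotProduct, star_trivial, dotProduct_comm]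
  change 0 < WithLp.ofLp x ⬝ᵥ M *ᵥ WithLp.ofLp x
  linarith

theorem hasDerivAt_cost_of_hasDerivAt_oag {ι : Type*} [Fintype ι] [DecidableEq ι]
    {P Phat : Matrix ι ι ℝ} {w : EuclideanSpace ℝ ι} {ε : ℝ} {φ : EuclideanSpace ℝ ι → ℝ}
    (hφ : Differentiable ℝ φ) {u : ℝ → EuclideanSpace ℝ ι} {t : ℝ}
    (hu : HasDerivAt u (-(ε • toEuclideanLin Phatᵀ
      (gradient φ (toEuclideanLin P (u t) + w)))) t) :
    HasDerivAt (fun t => φ (toEuclideanLin P (u t) + w))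
      (-ε * ⟪gradient φ (toEuclideanLin P (u t) + w),
        toEuclideanLin (P * Phatᵀ) (gradient φ (toEuclideanLin P (u t) + w))⟫) t := by
  set g := gradient φ (toEuclideanLin P (u t) + w)
  have hy : HasDerivAt (fun s => toEuclideanLin P (u s) + w)
      (toEuclideanLin P (-(ε • toEuclideanLin Phatᵀ g))) t :=
    ((toEuclideanLin P).toContinuousLinearMap.hasFDerivAt.comp_hasDerivAt t hu).add_const w
  rw [map_neg, map_smul, ← LinearMap.comp_apply, ← Matrix.toLpLin_mul] at hy
  convert (hφ _).hasGradientAt.comp_hasDerivAt hy using 1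
  rw [inner_neg_right, real_inner_smul_right, neg_mul]

/-- If `Π Π̂ᵀ + Π̂ Πᵀ ≻ 0` then along any solution of the OAG dynamics,
the cost `t ↦ φ(Πu(t) + w)` is strictly decreasing on any interval on which
`∇φ(Πu(t) + w) ≠ 0`. -/
theorem stmt2 {n : ℕ} (P Phat : Matrix (Fin n) (Fin n) ℝ)
    (w : EuclideanSpace ℝ (Fin n)) (ε : ℝ) (hε : 0 < ε)
    (φ : EuclideanSpace ℝ (Fin n) → ℝ)
    (hdiff : Differentiable ℝ φ)
    (hpd : (P * Phat.transpose + Phat * P.transpose).PosDef)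
    (u : ℝ → EuclideanSpace ℝ (Fin n))
    (hu : ∀ t : ℝ, HasDerivAt u
        (-(ε • Matrix.toEuclideanLin Phat.transpose
            (gradient φ (Matrix.toEuclideanLin P (u t) + w)))) t) :
    ∀ s : Set ℝ, s.OrdConnected →
      (∀ t ∈ s, gradient φ (Matrix.toEuclideanLin P (u t) + w) ≠ 0) →
      StrictAntiOn (fun t => φ (Matrix.toEuclideanLin P (u t) + w)) s := by
  intro s hs hgrad
  have hsymm : (P * Phatᵀ + (P * Phatᵀ)ᵀ).PosDef := by
    rwa [transpose_mul, transpose_transpose]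
  refine strictAntiOn_of_hasDerivAt_neg hs
    (fun t _ => hasDerivAt_cost_of_hasDerivAt_oag hdiff (hu t)) fun t ht => ?_
  rw [neg_mul]
  exact neg_neg_of_pos <| mul_pos hε <|
    inner_toEuclideanLin_pos_of_posDef_add_transpose hsymm (hgrad t ht)
end

section
/- Let G, K ∈ ℝ^{n×n} be invertible with I + GK invertible, set S = (I + GK)⁻¹, let Σ_w, Σ_r ∈ ℝ^{n×n} be symmetric positive definite, and write Σ = Σ_r + Σ_w. Define Σ_u = K S (Σ_w + Σ_r)(K S)ᵀ and Σ_{uy} = S(−Σ_w + G K Σ_r)(K S)ᵀ. Then Σ_{uy} Σ_u⁻¹ = Σ_r Σ⁻¹ G + (I − Σ_r Σ⁻¹)(−K⁻¹). -/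
open Matrix

/-- With `G, K, I + GK` invertible, `S = (I + GK)⁻¹`,
`Σ = Σ_r + Σ_w`, `Σ_u = KS(Σ_w + Σ_r)(KS)ᵀ` and `Σ_{uy} = S(−Σ_w + GKΣ_r)(KS)ᵀ`,
one has `Σ_{uy} Σ_u⁻¹ = Σ_r Σ⁻¹ G + (I − Σ_r Σ⁻¹)(−K⁻¹)`. -/
theorem stmt9 {n : ℕ} (G K : Matrix (Fin n) (Fin n) ℝ)
    (hG : IsUnit G.det) (hK : IsUnit K.det) (hGK : IsUnit (1 + G * K).det)
    (S : Matrix (Fin n) (Fin n) ℝ) (hS : S = (1 + G * K)⁻¹)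
    (Cw Cr : Matrix (Fin n) (Fin n) ℝ) (hCw : Cw.PosDef) (hCr : Cr.PosDef)
    (C Cu Cuy : Matrix (Fin n) (Fin n) ℝ)
    (hC : C = Cr + Cw)
    (hCu : Cu = K * S * (Cw + Cr) * (K * S).transpose)
    (hCuy : Cuy = S * (-Cw + G * K * Cr) * (K * S).transpose) :
    Cuy * Cu⁻¹ = Cr * C⁻¹ * G + (1 - Cr * C⁻¹) * (-K⁻¹) := by
  have hSdet : IsUnit S.det := by
    rw [hS]; exact (isUnit_nonsing_inv_det _ hGK)
  have hMdet : IsUnit (K * S).det := by rw [det_mul]; exact hK.mul hSdet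
  have hMTdet : IsUnit (K * S)ᵀ.det := by rwa [det_transpose]
  have hCpd : C.PosDef := by rw [hC]; exact hCr.add hCw
  have hCdet : IsUnit C.det := isUnit_iff_ne_zero.2 (ne_of_gt hCpd.det_pos)
  have hCwCr : Cw + Cr = C := by rw [hC, add_comm]
  have hCu_inv : Cu⁻¹ = (K * S)ᵀ⁻¹ * (C⁻¹ * (K * S)⁻¹) := by
    rw [hCu, hCwCr, Matrix.mul_inv_rev, Matrix.mul_inv_rev]
  have hMT : (K * S)ᵀ * (K * S)ᵀ⁻¹ = 1 := mul_nonsing_inv _ hMTdet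
  have hMinv : (K * S)⁻¹ = (1 + G * K) * K⁻¹ := by
    rw [Matrix.mul_inv_rev, hS, nonsing_inv_nonsing_inv _ hGK]
  have hSmul : S * (1 + G * K) = 1 := by
    rw [hS]; exact nonsing_inv_mul _ hGK
  have hCC : C * C⁻¹ = 1 := mul_nonsing_inv _ hCdet
  have hKK : K * K⁻¹ = 1 := mul_nonsing_inv _ hK
  have key : -Cw + G * K * Cr = (1 + G * K) * Cr - C := by
    rw [hC]; noncomm_ring
  calc Cuy * Cu⁻¹
      = S * (-Cw + G * K * Cr) * ((K * S)ᵀ * (K * S)ᵀ⁻¹) * (C⁻¹ * ((1 + G * K) * K⁻¹)) := by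
        rw [hCuy, hCu_inv, hMinv]; noncomm_ring
    _ = S * ((1 + G * K) * Cr - C) * (C⁻¹ * ((1 + G * K) * K⁻¹)) := by
        rw [hMT, key]; noncomm_ring
    _ = (S * (1 + G * K)) * (Cr * (C⁻¹ * ((1 + G * K) * K⁻¹)))
          - (S * (C * C⁻¹)) * ((1 + G * K) * K⁻¹) := by noncomm_ring
    _ = 1 * (Cr * (C⁻¹ * ((1 + G * K) * K⁻¹))) - (S * 1) * ((1 + G * K) * K⁻¹) := by
        rw [hSmul, hCC]
    _ = Cr * (C⁻¹ * ((1 + G * K) * K⁻¹)) - (S * (1 + G * K)) * K⁻¹ := by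
        rw [one_mul, mul_one, Matrix.mul_assoc]
    _ = Cr * (C⁻¹ * (K⁻¹ + G * (K * K⁻¹))) - 1 * K⁻¹ := by
        rw [hSmul]; noncomm_ring
    _ = Cr * C⁻¹ * G + (1 - Cr * C⁻¹) * (-K⁻¹) := by
        rw [hKK]; noncomm_ring
end

section
/- Let G, K ∈ ℝ^{n×n} be invertible with I + GK invertible, S = (I + GK)⁻¹, Λ ∈ ℝ^{n×n}, and set Π = G and Π̂ = ΛG + (I − Λ)(−K⁻¹). Then Π Π̂ᵀ + Π̂ Πᵀ is positive definite if and only if for all nonzero x ∈ ℝⁿ, xᵀ (I − Λ)(K S)⁻¹ Gᵀ x < xᵀ G Gᵀ x, i.e. if and only if condition (C): (1/2)(I − Λ)(K S)⁻¹Gᵀ + (1/2)((I − Λ)(K S)⁻¹Gᵀ)ᵀ ≺ G Gᵀ holds. -/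
open Matrix

/-!
Since `(KS)⁻¹ = S⁻¹K⁻¹ = K⁻¹ + G`, the product `Π̂Gᵀ` equals `GGᵀ - (I - Λ)(KS)⁻¹Gᵀ`. Both matrices
in the statement are symmetrizations `N + Nᵀ` (up to a factor `1/2`) of `N = GGᵀ - (I - Λ)(KS)⁻¹Gᵀ`,
and `xᵀ(N + Nᵀ)x = 2 xᵀNx`, so each is positive definite iff `xᵀNx > 0` for all `x ≠ 0`.
-/

namespace Matrix

variable {n : Type*} [Fintype n]

theorem posDef_add_transpose_iff (B : Matrix n n ℝ) :
    (B + Bᵀ).PosDef ↔ ∀ x : n → ℝ, x ≠ 0 → 0 < x ⬝ᵥ B *ᵥ x := by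
  have hHerm : (B + Bᵀ).IsHermitian := by
    rw [IsHermitian, conjTranspose_eq_transpose_of_trivial, transpose_add, transpose_transpose,
      add_comm]
  have hQuad (x : n → ℝ) : x ⬝ᵥ (B + Bᵀ) *ᵥ x = 2 * (x ⬝ᵥ B *ᵥ x) := by
    rw [add_mulVec, dotProduct_add, dotProduct_transpose_mulVec]
    ring
  simp only [posDef_iff_dotProduct_mulVec, star_trivial, hQuad, hHerm, true_and,
    Nat.ofNat_pos, mul_pos_iff_of_pos_left]

theorem inv_mul_inv_one_add_mul {R : Type*} [CommRing R] [DecidableEq n] {G K : Matrix n n R} (hK : IsUnit K.det)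
    (hGK : IsUnit (1 + G * K).det) : (K * (1 + G * K)⁻¹)⁻¹ = K⁻¹ + G := by
  rw [mul_inv_rev, nonsing_inv_nonsing_inv _ hGK, add_mul, one_mul, mul_assoc,
    mul_nonsing_inv _ hK, mul_one]

end Matrix

theorem stmt13_general {n : ℕ} (G K : Matrix (Fin n) (Fin n) ℝ)
    (hK : IsUnit K.det) (hGK : IsUnit (1 + G * K).det)
    (S : Matrix (Fin n) (Fin n) ℝ) (hS : S = (1 + G * K)⁻¹)
    (Λ P Phat : Matrix (Fin n) (Fin n) ℝ)
    (hP : P = G) (hPhat : Phat = Λ * G + (1 - Λ) * (-K⁻¹)) :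
    ((P * Phat.transpose + Phat * P.transpose).PosDef ↔
      ∀ x : Fin n → ℝ, x ≠ 0 →
        x ⬝ᵥ ((1 - Λ) * (K * S)⁻¹ * G.transpose).mulVec x
          < x ⬝ᵥ (G * G.transpose).mulVec x) ∧
    ((P * Phat.transpose + Phat * P.transpose).PosDef ↔
      (G * G.transpose -
        ((1 / 2 : ℝ) • ((1 - Λ) * (K * S)⁻¹ * G.transpose) +
          (1 / 2 : ℝ) • ((1 - Λ) * (K * S)⁻¹ * G.transpose).transpose)).PosDef) := by
  subst hP hS hPhat
  set A := (1 - Λ) * (K * (1 + P * K)⁻¹)⁻¹ * Pᵀ with hA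
  have hN : (Λ * P + (1 - Λ) * (-K⁻¹)) * Pᵀ = P * Pᵀ - A := by
    rw [hA, inv_mul_inv_one_add_mul hK hGK]
    noncomm_ring
  have hSymm : P * (Λ * P + (1 - Λ) * (-K⁻¹))ᵀ + (Λ * P + (1 - Λ) * (-K⁻¹)) * Pᵀ
      = (P * Pᵀ - A) + (P * Pᵀ - A)ᵀ := by
    rw [← hN, transpose_mul, transpose_transpose, add_comm]
  have hHalf : P * Pᵀ - ((1 / 2 : ℝ) • A + (1 / 2 : ℝ) • Aᵀ)
      = (1 / 2 : ℝ) • (P * Pᵀ - A) + ((1 / 2 : ℝ) • (P * Pᵀ - A))ᵀ := by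
    rw [transpose_smul, transpose_sub, transpose_mul P, transpose_transpose]
    module
  have hQuad (x : Fin n → ℝ) :
      0 < x ⬝ᵥ (P * Pᵀ - A) *ᵥ x ↔ x ⬝ᵥ A *ᵥ x < x ⬝ᵥ (P * Pᵀ) *ᵥ x := by
    rw [sub_mulVec, dotProduct_sub, sub_pos]
  rw [hSymm, hHalf, posDef_add_transpose_iff, posDef_add_transpose_iff]
  simp only [smul_mulVec, dotProduct_smul, smul_eq_mul, one_div, inv_pos, Nat.ofNat_pos,
    mul_pos_iff_of_pos_left, hQuad, and_self]

/-- With `Π = G` and `Π̂ = ΛG + (I − Λ)(−K⁻¹)`, the matrix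
`Π Π̂ᵀ + Π̂ Πᵀ` is positive definite iff `xᵀ(I − Λ)(KS)⁻¹Gᵀx < xᵀGGᵀx` for all `x ≠ 0`,
i.e. iff condition (C): `(1/2)(I − Λ)(KS)⁻¹Gᵀ + (1/2)((I − Λ)(KS)⁻¹Gᵀ)ᵀ ≺ GGᵀ`. -/
theorem stmt13 {n : ℕ} (G K : Matrix (Fin n) (Fin n) ℝ)
    (hG : IsUnit G.det) (hK : IsUnit K.det) (hGK : IsUnit (1 + G * K).det)
    (S : Matrix (Fin n) (Fin n) ℝ) (hS : S = (1 + G * K)⁻¹)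
    (Λ P Phat : Matrix (Fin n) (Fin n) ℝ)
    (hP : P = G) (hPhat : Phat = Λ * G + (1 - Λ) * (-K⁻¹)) :
    ((P * Phat.transpose + Phat * P.transpose).PosDef ↔
      ∀ x : Fin n → ℝ, x ≠ 0 →
        x ⬝ᵥ ((1 - Λ) * (K * S)⁻¹ * G.transpose).mulVec x
          < x ⬝ᵥ (G * G.transpose).mulVec x) ∧
    ((P * Phat.transpose + Phat * P.transpose).PosDef ↔
      (G * G.transpose -
        ((1 / 2 : ℝ) • ((1 - Λ) * (K * S)⁻¹ * G.transpose) +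
          (1 / 2 : ℝ) • ((1 - Λ) * (K * S)⁻¹ * G.transpose).transpose)).PosDef) :=
  stmt13_general G K hK hGK S hS Λ P Phat hP hPhat
end

section
/- Let G, K ∈ ℝ^{n×n} be invertible with I + GK invertible, S = (I + GK)⁻¹, Λ ∈ ℝ^{n×n}, and suppose condition (C') holds: xᵀ(I − Λ)(KS)⁻¹Gᵀx > xᵀGGᵀx for all nonzero x. Set Π = G and Π̂ = ΛΠ + (I − Λ)(−K⁻¹). Let w ∈ ℝⁿ, ε > 0, φ : ℝⁿ → ℝ differentiable, and let u : ℝ → ℝⁿ be a differentiable solution of u̇(t) = −ε Π̂ᵀ∇φ(Πu(t) + w). Then Π Π̂ᵀ + Π̂ Πᵀ is negative definite, and on any interval on which ∇φ(Πu(t) + w) ≠ 0 the cost t ↦ φ(Πu(t) + w) is strictly increasing; in particular the OAG dynamics do not converge to the minimizer from any non-stationary initial condition. -/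
open Matrix Filter

/-! Since `(K S)⁻¹ = (I + G K) K⁻¹ = K⁻¹ + G`, condition (C') says exactly that
`xᵀ Π̂ Gᵀ x < 0` for `x ≠ 0`, hence `N = -(Π Π̂ᵀ + Π̂ Πᵀ)` is positive definite. Along the
OAG flow the chain rule gives `d/dt φ(Π u + w) = -ε gᵀ Π Π̂ᵀ g = (ε/2) gᵀ N g` with
`g = ∇φ(Π u + w)`, so the cost increases strictly wherever `g ≠ 0`. A nondecreasing cost that
converges to its minimum value must be constant, which is impossible once its derivative is
positive at `t = 0`. -/

section MatrixAlgebra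

variable {n R : Type*} [Fintype n] [DecidableEq n] [CommRing R]

theorem Matrix.inv_mul_inv_one_add_mul_s15 {G K : Matrix n n R} (hK : IsUnit K.det)
    (hGK : IsUnit (1 + G * K).det) : (K * (1 + G * K)⁻¹)⁻¹ = K⁻¹ + G := by
  rw [Matrix.mul_inv_rev, Matrix.nonsing_inv_nonsing_inv _ hGK, add_mul, one_mul, mul_assoc,
    Matrix.mul_nonsing_inv K hK, mul_one]

/-- The paper's `Π̂`. -/
noncomputable def biasedEstimate (Λ G K : Matrix n n R) : Matrix n n R :=
  Λ * G + (1 - Λ) * (-K⁻¹)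

theorem one_sub_mul_inv_mul_transpose_eq {Λ G K : Matrix n n R} (hK : IsUnit K.det)
    (hGK : IsUnit (1 + G * K).det) :
    (1 - Λ) * (K * (1 + G * K)⁻¹)⁻¹ * Gᵀ = G * Gᵀ - biasedEstimate Λ G K * Gᵀ := by
  rw [Matrix.inv_mul_inv_one_add_mul_s15 hK hGK, biasedEstimate]
  noncomm_ring

theorem dotProduct_biasedEstimate_mul_transpose_mulVec_neg [PartialOrder R]
    [IsOrderedAddMonoid R] {Λ G K : Matrix n n R} (hK : IsUnit K.det)
    (hGK : IsUnit (1 + G * K).det)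
    (hC' : ∀ x : n → R, x ≠ 0 →
      x ⬝ᵥ (G * Gᵀ) *ᵥ x < x ⬝ᵥ ((1 - Λ) * (K * (1 + G * K)⁻¹)⁻¹ * Gᵀ) *ᵥ x)
    {x : n → R} (hx : x ≠ 0) :
    x ⬝ᵥ (biasedEstimate Λ G K * Gᵀ) *ᵥ x < 0 := by
  have h := hC' x hx
  rwa [one_sub_mul_inv_mul_transpose_eq hK hGK, Matrix.sub_mulVec, dotProduct_sub,
    sub_eq_add_neg, lt_add_iff_pos_right, Left.neg_pos_iff] at h

end MatrixAlgebra

theorem Matrix.dotProduct_mul_transpose_mulVec_comm {ι R : Type*} [Fintype ι] [CommSemiring R]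
    (A B : Matrix ι ι R) (x : ι → R) : x ⬝ᵥ (A * Bᵀ) *ᵥ x = x ⬝ᵥ (B * Aᵀ) *ᵥ x := by
  rw [← transpose_transpose (A * Bᵀ), transpose_mul, transpose_transpose,
    dotProduct_transpose_mulVec]

theorem Matrix.posDef_neg_mul_transpose_add {ι : Type*} [Fintype ι] {A B : Matrix ι ι ℝ}
    (hAB : ∀ x : ι → ℝ, x ≠ 0 → x ⬝ᵥ (A * Bᵀ) *ᵥ x < 0) : (-(B * Aᵀ + A * Bᵀ)).PosDef := by
  refine Matrix.posDef_iff_dotProduct_mulVec.mpr ⟨?_, fun x hx => ?_⟩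
  · rw [IsHermitian, conjTranspose_eq_transpose_of_trivial, transpose_neg, transpose_add,
      transpose_mul, transpose_mul, transpose_transpose, transpose_transpose, add_comm]
  · rw [star_trivial, neg_mulVec, dotProduct_neg, add_mulVec, dotProduct_add,
      dotProduct_mul_transpose_mulVec_comm B A]
    linarith [hAB x hx]

theorem hasDerivAt_cost_of_hasDerivAt_flow {ι : Type*} [Fintype ι] [DecidableEq ι]
    {P A : Matrix ι ι ℝ} {w : EuclideanSpace ℝ ι} {ε : ℝ} {φ : EuclideanSpace ℝ ι → ℝ}
    {u : ℝ → EuclideanSpace ℝ ι} {t : ℝ}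
    (hφ : DifferentiableAt ℝ φ (toEuclideanLin P (u t) + w))
    (hu : HasDerivAt u
      (-(ε • toEuclideanLin Aᵀ (gradient φ (toEuclideanLin P (u t) + w)))) t) :
    HasDerivAt (fun s => φ (toEuclideanLin P (u s) + w))
      (ε / 2 * ((gradient φ (toEuclideanLin P (u t) + w)).ofLp ⬝ᵥ
        (-(P * Aᵀ + A * Pᵀ)) *ᵥ (gradient φ (toEuclideanLin P (u t) + w)).ofLp)) t := by
  have hcurve := ((LinearMap.toContinuousLinearMap (toEuclideanLin P)).hasFDerivAt.comp_hasDerivAt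
    t hu).add_const w
  refine (hφ.hasGradientAt.hasFDerivAt.comp_hasDerivAt t hcurve).congr_deriv ?_
  rw [InnerProductSpace.toDual_apply_apply, map_neg, map_smul, inner_neg_right,
    real_inner_smul_right, EuclideanSpace.inner_eq_star_dotProduct, star_trivial,
    LinearMap.coe_toContinuousLinearMap', ofLp_toLpLin, toLin'_apply, ofLp_toLpLin,
    toLin'_apply, mulVec_mulVec, dotProduct_comm, neg_mulVec, dotProduct_neg, add_mulVec,
    dotProduct_add, dotProduct_mul_transpose_mulVec_comm A P]
  ring

theorem not_tendsto_of_hasDerivAt_nonneg {f f' : ℝ → ℝ} (hf : ∀ t, HasDerivAt f (f' t) t)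
    (hf' : 0 ≤ f') {t₀ : ℝ} (ht₀ : 0 < f' t₀) {m : ℝ} (hm : ∀ t, m ≤ f t) :
    ¬ Tendsto f atTop (nhds m) := by
  intro hlim
  have hconst : f = fun _ => m := funext fun t =>
    le_antisymm ((monotone_of_hasDerivAt_nonneg hf hf').ge_of_tendsto hlim t) (hm t)
  have h₀ := hf t₀
  rw [hconst] at h₀
  exact ht₀.ne' (h₀.unique (hasDerivAt_const t₀ m))

theorem stmt15_general {n : ℕ} (G K : Matrix (Fin n) (Fin n) ℝ)
    (hK : IsUnit K.det) (hGK : IsUnit (1 + G * K).det)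
    (S : Matrix (Fin n) (Fin n) ℝ) (hS : S = (1 + G * K)⁻¹)
    (Λ : Matrix (Fin n) (Fin n) ℝ)
    (hC' : ∀ x : Fin n → ℝ, x ≠ 0 →
      x ⬝ᵥ (G * G.transpose).mulVec x
        < x ⬝ᵥ ((1 - Λ) * (K * S)⁻¹ * G.transpose).mulVec x)
    (P Phat : Matrix (Fin n) (Fin n) ℝ)
    (hP : P = G) (hPhat : Phat = Λ * P + (1 - Λ) * (-K⁻¹))
    (w : EuclideanSpace ℝ (Fin n)) (ε : ℝ) (hε : 0 < ε)
    (φ : EuclideanSpace ℝ (Fin n) → ℝ)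
    (hdiff : Differentiable ℝ φ)
    (u : ℝ → EuclideanSpace ℝ (Fin n))
    (hu : ∀ t : ℝ, HasDerivAt u
        (-(ε • Matrix.toEuclideanLin Phat.transpose
            (gradient φ (Matrix.toEuclideanLin P (u t) + w)))) t) :
    (-(P * Phat.transpose + Phat * P.transpose)).PosDef ∧
    (∀ s : Set ℝ, s.OrdConnected →
      (∀ t ∈ s, gradient φ (Matrix.toEuclideanLin P (u t) + w) ≠ 0) →
      StrictMonoOn (fun t => φ (Matrix.toEuclideanLin P (u t) + w)) s) ∧
    (∀ ustar : EuclideanSpace ℝ (Fin n),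
      (∀ v, φ (Matrix.toEuclideanLin P ustar + w) ≤ φ (Matrix.toEuclideanLin P v + w)) →
      gradient φ (Matrix.toEuclideanLin P (u 0) + w) ≠ 0 →
      ¬ Tendsto u atTop (nhds ustar)) := by
  subst P Phat S
  have hN : (-(G * (biasedEstimate Λ G K)ᵀ + biasedEstimate Λ G K * Gᵀ)).PosDef :=
    posDef_neg_mul_transpose_add fun x hx =>
      dotProduct_biasedEstimate_mul_transpose_mulVec_neg hK hGK hC' hx
  set grad := fun t => gradient φ (toEuclideanLin G (u t) + w)
  set rate := fun t => ε / 2 * ((grad t).ofLp ⬝ᵥ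
    (-(G * (biasedEstimate Λ G K)ᵀ + biasedEstimate Λ G K * Gᵀ)) *ᵥ (grad t).ofLp)
  have hcost (t : ℝ) : HasDerivAt (fun s => φ (toEuclideanLin G (u s) + w)) (rate t) t :=
    hasDerivAt_cost_of_hasDerivAt_flow (hdiff _) (hu t)
  have hrate_pos (t : ℝ) (ht : grad t ≠ 0) : 0 < rate t :=
    mul_pos (half_pos hε) (hN.dotProduct_mulVec_pos ((WithLp.ofLp_injective 2).ne ht))
  have hrate_nonneg : 0 ≤ rate := fun t =>
    mul_nonneg (half_pos hε).le (hN.posSemidef.dotProduct_mulVec_nonneg _)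
  refine ⟨hN, fun s hs hgrad => ?_, fun ustar hmin hgrad₀ hlim => ?_⟩
  · exact strictMonoOn_of_hasDerivWithinAt_pos hs.convex
      (fun t _ => (hcost t).continuousAt.continuousWithinAt)
      (fun t _ => (hcost t).hasDerivWithinAt)
      (fun t ht => hrate_pos t (hgrad t (interior_subset ht)))
  · refine not_tendsto_of_hasDerivAt_nonneg hcost hrate_nonneg (hrate_pos 0 hgrad₀)
      (fun t => hmin (u t)) ?_
    have hcont : Continuous fun v => φ (toEuclideanLin G v + w) :=
      hdiff.continuous.comp (by fun_prop)
    exact (hcont.tendsto ustar).comp hlim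

/-- **OAG divergence.** Under condition (C′), with `Π = G` and
`Π̂ = ΛΠ + (I − Λ)(−K⁻¹)`, the matrix `Π Π̂ᵀ + Π̂ Πᵀ` is negative definite; along any
solution of the OAG dynamics the cost `t ↦ φ(Πu(t) + w)` is strictly increasing on any
interval where `∇φ(Πu(t) + w) ≠ 0`; in particular the dynamics do not converge to a
minimizer from any non-stationary initial condition. -/
theorem stmt15 {n : ℕ} (G K : Matrix (Fin n) (Fin n) ℝ)
    (hG : IsUnit G.det) (hK : IsUnit K.det) (hGK : IsUnit (1 + G * K).det)
    (S : Matrix (Fin n) (Fin n) ℝ) (hS : S = (1 + G * K)⁻¹)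
    (Λ : Matrix (Fin n) (Fin n) ℝ)
    (hC' : ∀ x : Fin n → ℝ, x ≠ 0 →
      x ⬝ᵥ (G * G.transpose).mulVec x
        < x ⬝ᵥ ((1 - Λ) * (K * S)⁻¹ * G.transpose).mulVec x)
    (P Phat : Matrix (Fin n) (Fin n) ℝ)
    (hP : P = G) (hPhat : Phat = Λ * P + (1 - Λ) * (-K⁻¹))
    (w : EuclideanSpace ℝ (Fin n)) (ε : ℝ) (hε : 0 < ε)
    (φ : EuclideanSpace ℝ (Fin n) → ℝ)
    (hdiff : Differentiable ℝ φ)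
    (u : ℝ → EuclideanSpace ℝ (Fin n))
    (hu : ∀ t : ℝ, HasDerivAt u
        (-(ε • Matrix.toEuclideanLin Phat.transpose
            (gradient φ (Matrix.toEuclideanLin P (u t) + w)))) t) :
    (-(P * Phat.transpose + Phat * P.transpose)).PosDef ∧
    (∀ s : Set ℝ, s.OrdConnected →
      (∀ t ∈ s, gradient φ (Matrix.toEuclideanLin P (u t) + w) ≠ 0) →
      StrictMonoOn (fun t => φ (Matrix.toEuclideanLin P (u t) + w)) s) ∧
    (∀ ustar : EuclideanSpace ℝ (Fin n),
      (∀ v, φ (Matrix.toEuclideanLin P ustar + w) ≤ φ (Matrix.toEuclideanLin P v + w)) →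
      gradient φ (Matrix.toEuclideanLin P (u 0) + w) ≠ 0 →
      ¬ Tendsto u atTop (nhds ustar)) :=
  stmt15_general G K hK hGK S hS Λ hC' P Phat hP hPhat w ε hε φ hdiff u hu
end
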